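/- For formal variables a,b,c,d,x_i,x_j, the sum Σ_{r≥s≥0} a^{⌈(2r−1)/2⌉} b^{⌊(2r−1)/2⌋} c^s d^s (x_i^{2r} x_j^{2s} − x_j^{2r} x_i^{2s}) equals a(x_i^2 − x_j^2) / ((1 − a b x_i^2)(1 − a b x_j^2)(1 − a b c d x_i^2 x_j^2)); here ⌈(2r−1)/2⌉ = r and ⌊(2r−1)/2⌋ = r−1 for r ≥ 1 and the r=s=0 term vanishes, so the sum is Σ_{r≥s≥0, r≥1} a^r b^{r−1} c^s d^s (x_i^{2r} x_j^{2s} − x_j^{2r} x_i^{2s}). -/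

import Mathlib

open MvPowerSeries Finset

private lemma coeff_X0_pow_mul_eq_zero {m : Fin 6 →₀ ℕ} {k : ℕ} (h : m 0 < k)
    (f : MvPowerSeries (Fin 6) ℚ) :
    coeff m ((X 0 : MvPowerSeries (Fin 6) ℚ) ^ k * f) = 0 := by
  classical
  rw [coeff_mul]
  apply Finset.sum_eq_zero
  intro pr hmem
  rw [Finset.HasAntidiagonal.mem_antidiagonal] at hmem
  rw [coeff_X_pow]
  split_ifs with he
  · exfalso
    have h0 : pr.1 0 + pr.2 0 = m 0 := by
      rw [← Finsupp.add_apply, hmem]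
    rw [he, Finsupp.single_eq_same] at h0
    omega
  · simp

set_option maxHeartbeats 2000000 in
/-- with `a,b,c,d,x_i,x_j` formal variables,
`Σ_{r≥s≥0, r≥1} a^r b^{r−1} c^s d^s (x_i^{2r} x_j^{2s} − x_j^{2r} x_i^{2s})
  = a(x_i² − x_j²) / ((1 − a b x_i²)(1 − a b x_j²)(1 − a b c d x_i² x_j²))`.
Stated in the equivalent denominator-cleared, coefficientwise form. -/
theorem stanley_sum_case_ii
    (a b c d xi xj : MvPowerSeries (Fin 6) ℚ)
    (ha : a = X 0) (hb : b = X 1) (hc : c = X 2) (hd : d = X 3)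
    (hxi : xi = X 4) (hxj : xj = X 5) :
    ∀ m : Fin 6 →₀ ℕ,
      (∑ᶠ p : {q : ℕ × ℕ // q.2 ≤ q.1 ∧ 1 ≤ q.1},
        coeff m
          ((1 - a * b * xi ^ 2) * (1 - a * b * xj ^ 2) * (1 - a * b * c * d * xi ^ 2 * xj ^ 2) *
            (a ^ p.1.1 * b ^ (p.1.1 - 1) * c ^ p.1.2 * d ^ p.1.2 *
              (xi ^ (2 * p.1.1) * xj ^ (2 * p.1.2) -
               xj ^ (2 * p.1.1) * xi ^ (2 * p.1.2))))) =
      coeff m (a * (xi ^ 2 - xj ^ 2)) := by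
  intro m
  classical
  obtain ⟨N, hN⟩ : ∃ n, n = m 0 := ⟨m 0, rfl⟩
  -- vanishing of terms with r > N
  have hvan : ∀ r s : ℕ, N < r →
      coeff m
        ((1 - a * b * xi ^ 2) * (1 - a * b * xj ^ 2) * (1 - a * b * c * d * xi ^ 2 * xj ^ 2) *
          (a ^ r * b ^ (r - 1) * c ^ s * d ^ s *
            (xi ^ (2 * r) * xj ^ (2 * s) - xj ^ (2 * r) * xi ^ (2 * s)))) = 0 := by
    intro r s hr
    have hre : (1 - a * b * xi ^ 2) * (1 - a * b * xj ^ 2) *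
          (1 - a * b * c * d * xi ^ 2 * xj ^ 2) *
          (a ^ r * b ^ (r - 1) * c ^ s * d ^ s *
            (xi ^ (2 * r) * xj ^ (2 * s) - xj ^ (2 * r) * xi ^ (2 * s)))
        = (X 0 : MvPowerSeries (Fin 6) ℚ) ^ r *
          ((1 - a * b * xi ^ 2) * (1 - a * b * xj ^ 2) *
            (1 - a * b * c * d * xi ^ 2 * xj ^ 2) *
            (b ^ (r - 1) * c ^ s * d ^ s *
              (xi ^ (2 * r) * xj ^ (2 * s) - xj ^ (2 * r) * xi ^ (2 * s)))) := by
      rw [← ha]; ring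
    rw [hre]
    exact coeff_X0_pow_mul_eq_zero (by omega) _
  -- vanishing of diagonal terms r = s
  have hdiag : ∀ r : ℕ,
      coeff m
        ((1 - a * b * xi ^ 2) * (1 - a * b * xj ^ 2) * (1 - a * b * c * d * xi ^ 2 * xj ^ 2) *
          (a ^ r * b ^ (r - 1) * c ^ r * d ^ r *
            (xi ^ (2 * r) * xj ^ (2 * r) - xj ^ (2 * r) * xi ^ (2 * r)))) = 0 := by
    intro r
    have h0 : (1 - a * b * xi ^ 2) * (1 - a * b * xj ^ 2) *
        (1 - a * b * c * d * xi ^ 2 * xj ^ 2) *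
        (a ^ r * b ^ (r - 1) * c ^ r * d ^ r *
          (xi ^ (2 * r) * xj ^ (2 * r) - xj ^ (2 * r) * xi ^ (2 * r)))
        = 0 := by ring
    rw [h0, map_zero]
  -- the reindexing map
  set e : ℕ × ℕ → {q : ℕ × ℕ // q.2 ≤ q.1 ∧ 1 ≤ q.1} :=
    fun st => ⟨(st.1 + st.2 + 1, st.1), by omega⟩ with he_def
  set R : Finset (ℕ × ℕ) := Finset.range (N + 1) ×ˢ Finset.range N with hR
  -- the finsum is a finite sum over the image of R
  have hsupp : Function.support
      (fun p : {q : ℕ × ℕ // q.2 ≤ q.1 ∧ 1 ≤ q.1} =>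
        coeff m
          ((1 - a * b * xi ^ 2) * (1 - a * b * xj ^ 2) * (1 - a * b * c * d * xi ^ 2 * xj ^ 2) *
            (a ^ p.1.1 * b ^ (p.1.1 - 1) * c ^ p.1.2 * d ^ p.1.2 *
              (xi ^ (2 * p.1.1) * xj ^ (2 * p.1.2) -
               xj ^ (2 * p.1.1) * xi ^ (2 * p.1.2))))) ⊆ ↑(R.image e) := by
    rintro ⟨⟨r, s⟩, hle, h1⟩ hp
    rw [Function.mem_support] at hp
    rcases eq_or_lt_of_le hle with heq | hlt
    · have heq' : s = r := heq
      subst heq'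
      exact absurd (hdiag s) hp
    · have hlt' : s < r := hlt
      by_cases hrN : N < r
      · exact absurd (hvan r s hrN) hp
      · refine Finset.mem_coe.2 (Finset.mem_image.2 ⟨(s, r - s - 1), ?_, ?_⟩)
        · simp only [hR, Finset.mem_product, Finset.mem_range]
          show s < N + 1 ∧ r - s - 1 < N
          omega
        · apply Subtype.ext
          rw [he_def]
          show (s + (r - s - 1) + 1, s) = (r, s)
          have hr : s + (r - s - 1) + 1 = r := by omega
          rw [hr]
  rw [finsum_eq_sum_of_support_subset _ hsupp]
  have hinj : ∀ x ∈ R, ∀ y ∈ R, e x = e y → x = y := by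
    rintro ⟨x1, x2⟩ _ ⟨y1, y2⟩ _ hxy
    have h := Subtype.ext_iff.1 hxy
    simp only [he_def, Prod.mk.injEq] at h ⊢
    omega
  rw [Finset.sum_image hinj]
  -- rewrite each summand in factored form
  have hterm : ∀ st ∈ R,
      coeff m
        ((1 - a * b * xi ^ 2) * (1 - a * b * xj ^ 2) * (1 - a * b * c * d * xi ^ 2 * xj ^ 2) *
          (a ^ (e st).1.1 * b ^ ((e st).1.1 - 1) * c ^ (e st).1.2 * d ^ (e st).1.2 *
            (xi ^ (2 * (e st).1.1) * xj ^ (2 * (e st).1.2) -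
             xj ^ (2 * (e st).1.1) * xi ^ (2 * (e st).1.2))))
      = coeff m
        ((1 - a * b * xi ^ 2) * (1 - a * b * xj ^ 2) * (1 - a * b * c * d * xi ^ 2 * xj ^ 2) *
            a * (a * b * c * d * xi ^ 2 * xj ^ 2) ^ st.1 *
          ((a * b * xi ^ 2) ^ st.2 * xi ^ 2 - (a * b * xj ^ 2) ^ st.2 * xj ^ 2)) := by
    rintro ⟨s, t⟩ _
    rw [he_def]
    show coeff m
        ((1 - a * b * xi ^ 2) * (1 - a * b * xj ^ 2) * (1 - a * b * c * d * xi ^ 2 * xj ^ 2) *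
          (a ^ (s + t + 1) * b ^ (s + t) * c ^ s * d ^ s *
            (xi ^ (2 * (s + t + 1)) * xj ^ (2 * s) -
             xj ^ (2 * (s + t + 1)) * xi ^ (2 * s)))) = _
    congr 1
    ring
  refine (Finset.sum_congr rfl hterm).trans ?_
  rw [← map_sum]
  rw [hR, Finset.sum_product]
  -- split the rectangular sum into a product of two geometric sums
  have hsplit :
      (∑ x ∈ Finset.range (N + 1), ∑ y ∈ Finset.range N,
        (1 - a * b * xi ^ 2) * (1 - a * b * xj ^ 2) * (1 - a * b * c * d * xi ^ 2 * xj ^ 2) *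
            a * (a * b * c * d * xi ^ 2 * xj ^ 2) ^ x *
          ((a * b * xi ^ 2) ^ y * xi ^ 2 - (a * b * xj ^ 2) ^ y * xj ^ 2))
      = (1 - a * b * xi ^ 2) * (1 - a * b * xj ^ 2) * (1 - a * b * c * d * xi ^ 2 * xj ^ 2) *
            a * (∑ x ∈ Finset.range (N + 1), (a * b * c * d * xi ^ 2 * xj ^ 2) ^ x) *
          (∑ y ∈ Finset.range N,
            ((a * b * xi ^ 2) ^ y * xi ^ 2 - (a * b * xj ^ 2) ^ y * xj ^ 2)) := by
    rw [Finset.mul_sum (Finset.range (N + 1))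
          (fun x => (a * b * c * d * xi ^ 2 * xj ^ 2) ^ x)
          ((1 - a * b * xi ^ 2) * (1 - a * b * xj ^ 2) *
            (1 - a * b * c * d * xi ^ 2 * xj ^ 2) * a), Finset.sum_mul]
    exact Finset.sum_congr rfl fun x _ => (Finset.mul_sum _ _ _).symm
  refine (congrArg (coeff m) hsplit).trans ?_
  -- the key power series identity
  have h1 := geom_sum_mul (a * b * c * d * xi ^ 2 * xj ^ 2) (N + 1)
  have h2 := geom_sum_mul (a * b * xi ^ 2) N
  have h3 := geom_sum_mul (a * b * xj ^ 2) N
  have key : (1 - a * b * xi ^ 2) * (1 - a * b * xj ^ 2) *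
            (1 - a * b * c * d * xi ^ 2 * xj ^ 2) *
            a * (∑ x ∈ Finset.range (N + 1), (a * b * c * d * xi ^ 2 * xj ^ 2) ^ x) *
          (∑ y ∈ Finset.range N,
            ((a * b * xi ^ 2) ^ y * xi ^ 2 - (a * b * xj ^ 2) ^ y * xj ^ 2))
      = a * (xi ^ 2 - xj ^ 2) + a ^ (N + 1) *
          ((1 - a * b * xi ^ 2) * xj ^ 2 * (b * xj ^ 2) ^ N -
           (1 - a * b * xj ^ 2) * xi ^ 2 * (b * xi ^ 2) ^ N -
           a * (b * c * d * xi ^ 2 * xj ^ 2) ^ (N + 1) *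
             ((1 - a * b * xj ^ 2) * xi ^ 2 * (1 - (a * b * xi ^ 2) ^ N) -
              (1 - a * b * xi ^ 2) * xj ^ 2 * (1 - (a * b * xj ^ 2) ^ N))) := by
    have h4 : (∑ t ∈ Finset.range N,
          ((a * b * xi ^ 2) ^ t * xi ^ 2 - (a * b * xj ^ 2) ^ t * xj ^ 2))
        = xi ^ 2 * (∑ t ∈ Finset.range N, (a * b * xi ^ 2) ^ t) -
          xj ^ 2 * (∑ t ∈ Finset.range N, (a * b * xj ^ 2) ^ t) := by
      rw [Finset.sum_sub_distrib, Finset.mul_sum, Finset.mul_sum]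
      congr 1 <;> exact Finset.sum_congr rfl fun _ _ => mul_comm _ _
    rw [h4]
    linear_combination
      (-(a * (1 - a * b * xi ^ 2) * (1 - a * b * xj ^ 2) *
          (xi ^ 2 * (∑ t ∈ Finset.range N, (a * b * xi ^ 2) ^ t) -
           xj ^ 2 * (∑ t ∈ Finset.range N, (a * b * xj ^ 2) ^ t)))) * h1 +
      (-(a * (1 - (a * b * c * d * xi ^ 2 * xj ^ 2) ^ (N + 1)) *
          (1 - a * b * xj ^ 2) * xi ^ 2)) * h2 +
      (a * (1 - (a * b * c * d * xi ^ 2 * xj ^ 2) ^ (N + 1)) *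
          (1 - a * b * xi ^ 2) * xj ^ 2) * h3
  rw [key, map_add, ha]
  rw [coeff_X0_pow_mul_eq_zero (by omega) _, add_zero]
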